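/- Let Λ_A = diag(λ_{A,1},…,λ_{A,d}) and Λ_B = diag(λ_{B,1},…,λ_{B,d}) be diagonal density matrices. Then there exists a coupling ρ_{AB} of Λ_A and Λ_B with Tr(P_s ρ_{AB}) ≥ F(Λ_A, Λ_B) + (1/2)·minᵢ(√λ_{A,i} − √λ_{B,i})². -/

import Mathlib

open scoped Matrix Kronecker ComplexOrder

noncomputable section

namespace QEMD

variable {m n : Type*} [Fintype m] [Fintype n] [DecidableEq m] [DecidableEq n]

/-- Total square root: the PSD square root if `A` is PSD, else `0`. -/
def msqrt (A : Matrix n n ℂ) : Matrix n n ℂ :=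
  letI := Classical.dec A.PosSemidef
  if h : A.PosSemidef then (h.1.eigenvectorUnitary : Matrix n n ℂ) *
    Matrix.diagonal ((↑) ∘ Real.sqrt ∘ h.1.eigenvalues) * (star h.1.eigenvectorUnitary : Matrix n n ℂ)
  else 0

/-- Trace norm `‖A‖₁ = Tr √(AᴴA)`. -/
def traceNorm (A : Matrix n n ℂ) : ℝ :=
  ((msqrt (Aᴴ * A)).trace).re

/-- Trace distance `D(ρ,σ) = ½‖ρ-σ‖₁`. -/
def traceDist (ρ σ : Matrix n n ℂ) : ℝ := traceNorm (ρ - σ) / 2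

/-- Fidelity `F(ρ,σ) = Tr √(√ρ σ √ρ)`. -/
def fidelity (ρ σ : Matrix n n ℂ) : ℝ :=
  ((msqrt (msqrt ρ * σ * msqrt ρ)).trace).re

/-- Density matrix predicate. -/
def IsDensity (ρ : Matrix n n ℂ) : Prop := ρ.PosSemidef ∧ ρ.trace = 1

/-- Projector `|v⟩⟨v|` onto a vector. -/
def proj (v : n → ℂ) : Matrix n n ℂ := Matrix.of fun i j => v i * star (v j)

/-- Partial trace over the first (left) factor. -/
def traceLeft (ρ : Matrix (m × n) (m × n) ℂ) : Matrix n n ℂ :=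
  Matrix.of fun i j => ∑ k, ρ (k, i) (k, j)

/-- Partial trace over the second (right) factor. -/
def traceRight (ρ : Matrix (m × n) (m × n) ℂ) : Matrix m m ℂ :=
  Matrix.of fun i j => ∑ k, ρ (i, k) (j, k)

/-- The swap operator `S|αβ⟩ = |βα⟩` on `ℂ^d ⊗ ℂ^d`. -/
def swap (d : ℕ) : Matrix (Fin d × Fin d) (Fin d × Fin d) ℂ :=
  Matrix.of fun p q => if p.1 = q.2 ∧ p.2 = q.1 then 1 else 0

/-- Projection onto the symmetric subspace, `P_s = (I + S)/2`. -/
def Psym (d : ℕ) : Matrix (Fin d × Fin d) (Fin d × Fin d) ℂ := (2:ℂ)⁻¹ • (1 + swap d)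

/-- Projection onto the antisymmetric subspace, `P_as = (I - S)/2`. -/
def Pasym (d : ℕ) : Matrix (Fin d × Fin d) (Fin d × Fin d) ℂ := (2:ℂ)⁻¹ • (1 - swap d)

/-- `ρAB` is a quantum coupling of `ρA` and `ρB`. -/
def IsCoupling (ρAB : Matrix (m × n) (m × n) ℂ) (ρA : Matrix m m ℂ)
    (ρB : Matrix n n ℂ) : Prop :=
  IsDensity ρAB ∧ traceRight ρAB = ρA ∧ traceLeft ρAB = ρB

/-- The maximally entangled vector `|Φ⟩ = (1/√d) ∑ᵢ |i⟩|i⟩`. -/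
def maxEnt (d : ℕ) : Fin d × Fin d → ℂ :=
  fun p => if p.1 = p.2 then ((1 / Real.sqrt d : ℝ) : ℂ) else 0

/-!
With `m = min a b`, let `x` and `y` be the excesses `a - m` and `b - m` normalized to total
mass one. The coupling is `∑ᵢ cᵢ |ii⟩⟨ii| + ∑ᵢⱼ |ψᵢⱼ⟩⟨ψᵢⱼ|` with
`ψᵢⱼ = uᵢⱼ |ij⟩ + vᵢⱼ |ji⟩`, `uᵢⱼ² = min (aᵢ yⱼ) (bⱼ xᵢ)` and `vᵢⱼ² = min (mᵢ yⱼ) (mⱼ xᵢ)`.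
The two weights differ by the classical plan `(aᵢ - mᵢ) yⱼ` moving the excess of `a` onto that
of `b`, which fixes the marginals, and the diagonal weights `cᵢ ≥ 0` fill them up.
As `⟨ψ|S|ψ⟩ = ‖ψ‖² - (u - v)²` for such a vector (and `ψᵢᵢ = 0`),
`Tr(P_s ρ) = 1 - ½ ∑ᵢⱼ (uᵢⱼ - vᵢⱼ)²`.
Each `(uᵢⱼ - vᵢⱼ)²` is one of `yⱼ (√aᵢ - √mᵢ)²` and `xᵢ (√bⱼ - √mⱼ)²`, and both of these
are at least `β xᵢ yⱼ`, where `β = minᵢ (√aᵢ - √bᵢ)²`, because `(√aᵢ - √mᵢ)² = (√aᵢ - √bᵢ)²`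
wherever `xᵢ > 0`. So `(uᵢⱼ - vᵢⱼ)²` is at most their sum minus `β xᵢ yⱼ`, and summing gives
`∑ᵢ (√aᵢ - √bᵢ)² - β = 2 (1 - F) - β`.
-/

lemma sq_sqrt_min_sub_sqrt_min_le {a a₀ b b₀ x y : ℝ} (hx : 0 ≤ x) (hy : 0 ≤ y)
    (h : (a - a₀) * y = (b - b₀) * x) :
    (√(min (a * y) (b * x)) - √(min (a₀ * y) (b₀ * x))) ^ 2 ≤
      max (y * (√a - √a₀) ^ 2) (x * (√b - √b₀) ^ 2) := by
  rcases le_total (a₀ * y) (b₀ * x) with h₀ | h₀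
  · have h₁ : a * y ≤ b * x := by linear_combination h₀ + h
    rw [min_eq_left h₀, min_eq_left h₁, Real.sqrt_mul' _ hy, Real.sqrt_mul' _ hy, ← sub_mul,
      mul_pow, Real.sq_sqrt hy, mul_comm]
    exact le_max_left _ _
  · have h₁ : b * x ≤ a * y := by linear_combination h₀ - h
    rw [min_eq_right h₀, min_eq_right h₁, Real.sqrt_mul' _ hx, Real.sqrt_mul' _ hx, ← sub_mul,
      mul_pow, Real.sq_sqrt hx, mul_comm]
    exact le_max_right _ _

lemma sq_sqrt_sub_sqrt_min_add_sq (a b : ℝ) :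
    (√a - √(min a b)) ^ 2 + (√b - √(min a b)) ^ 2 = (√a - √b) ^ 2 := by
  rcases le_total a b with h | h
  · rw [min_eq_left h]; ring
  · rw [min_eq_right h]; ring

lemma sum_sq_sqrt_sub_sqrt {ι : Type*} [Fintype ι] {a b : ι → ℝ} (ha : ∀ i, 0 ≤ a i)
    (hb : ∀ i, 0 ≤ b i) :
    ∑ i, (√(a i) - √(b i)) ^ 2 = ∑ i, a i + ∑ i, b i - 2 * ∑ i, √(a i * b i) := by
  simp only [sub_sq, Real.sq_sqrt (ha _), Real.sq_sqrt (hb _), Real.sqrt_mul (ha _),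
    Finset.sum_add_distrib, Finset.sum_sub_distrib, Finset.mul_sum, mul_assoc]
  ring

section Weights

variable {ι : Type*}

def excess (a b : ι → ℝ) (i : ι) : ℝ := a i - min (a i) (b i)

lemma excess_nonneg (a b : ι → ℝ) (i : ι) : 0 ≤ excess a b i := sub_nonneg.2 (min_le_left _ _)

lemma excess_eq_zero_or (a b : ι → ℝ) (i : ι) : excess a b i = 0 ∨ excess b a i = 0 := by
  unfold excess
  rcases le_total (a i) (b i) with h | h
  · left; rw [min_eq_left h, sub_self]
  · right; rw [min_eq_left h, sub_self]

variable [Fintype ι]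

/-- Identically zero when `a ≤ b`, by division by zero. -/
def excessWeight (a b : ι → ℝ) (i : ι) : ℝ := excess a b i / ∑ k, excess a b k

variable (a b : ι → ℝ)

lemma excessWeight_nonneg (i : ι) : 0 ≤ excessWeight a b i :=
  div_nonneg (excess_nonneg a b i) (Finset.sum_nonneg fun k _ => excess_nonneg a b k)

lemma excessWeight_eq_zero {i : ι} (h : excess a b i = 0) : excessWeight a b i = 0 := by
  rw [excessWeight, h, zero_div]

lemma sum_excessWeight_eq_one_or : ∑ i, excessWeight a b i = 1 ∨ ∀ i, excess a b i = 0 := by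
  by_cases h : ∑ k, excess a b k = 0
  · exact .inr fun i => (Finset.sum_eq_zero_iff_of_nonneg fun k _ => excess_nonneg a b k).1 h i
      (Finset.mem_univ i)
  · exact .inl (by simp only [excessWeight]; rw [← Finset.sum_div, div_self h])

lemma sum_excessWeight_le_one : ∑ i, excessWeight a b i ≤ 1 := by
  rcases sum_excessWeight_eq_one_or a b with h | h
  · exact h.le
  · simp [excessWeight_eq_zero a b (h _)]

lemma excessWeight_le_one (i : ι) : excessWeight a b i ≤ 1 :=
  (Finset.single_le_sum (fun k _ => excessWeight_nonneg a b k) (Finset.mem_univ i)).trans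
    (sum_excessWeight_le_one a b)

lemma mul_excessWeight_le {β : ℝ} {i : ι} (hβ : β ≤ (√(a i) - √(b i)) ^ 2) :
    β * excessWeight a b i ≤ (√(a i) - √(min (a i) (b i))) ^ 2 := by
  by_cases hp : excess a b i = 0
  · rw [excessWeight_eq_zero a b hp, mul_zero]
    positivity
  · have hba : b i ≤ a i := by
      by_contra! h
      exact hp (by rw [excess, min_eq_left h.le, sub_self])
    rw [min_eq_right hba]
    nlinarith [excessWeight_nonneg a b i, excessWeight_le_one a b i, sq_nonneg (√(a i) - √(b i))]

variable {a b}

lemma sum_excess_comm (hab : ∑ i, a i = ∑ i, b i) : ∑ i, excess a b i = ∑ i, excess b a i := by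
  simp only [excess, Finset.sum_sub_distrib, hab, min_comm]

lemma sum_excessWeight_comm (hab : ∑ i, a i = ∑ i, b i) :
    ∑ i, excessWeight a b i = ∑ i, excessWeight b a i := by
  simp only [excessWeight, ← Finset.sum_div, sum_excess_comm hab]

lemma excess_mul_excessWeight_comm (hab : ∑ i, a i = ∑ i, b i) (i j : ι) :
    excess a b i * excessWeight b a j = excess b a j * excessWeight a b i := by
  simp only [excessWeight, sum_excess_comm hab]
  ring

lemma excess_mul_sum_excessWeight (hab : ∑ i, a i = ∑ i, b i) (i : ι) :
    excess a b i * ∑ j, excessWeight b a j = excess a b i := by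
  rcases sum_excessWeight_eq_one_or a b with h | h
  · rw [← sum_excessWeight_comm hab, h, mul_one]
  · rw [h i, zero_mul]

variable (a b)

def directWeight (i j : ι) : ℝ :=
  min (a i * excessWeight b a j) (b j * excessWeight a b i)

def swapWeight (i j : ι) : ℝ :=
  min (min (a i) (b i) * excessWeight b a j) (min (a j) (b j) * excessWeight a b i)

def diagWeight (i : ι) : ℝ := a i - ∑ j, (directWeight a b i j + swapWeight a b j i)

lemma sum_diagWeight_add_sum :
    ∑ i, diagWeight a b i + ∑ i, ∑ j, (directWeight a b i j + swapWeight a b i j) = ∑ i, a i := by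
  simp only [diagWeight, Finset.sum_sub_distrib, Finset.sum_add_distrib]
  rw [Finset.sum_comm (f := fun i j => swapWeight a b j i)]
  ring

variable {a b}

section Nonneg

variable (ha : ∀ i, 0 ≤ a i) (hb : ∀ i, 0 ≤ b i)
include ha hb

lemma directWeight_nonneg (i j : ι) : 0 ≤ directWeight a b i j :=
  le_min (mul_nonneg (ha i) (excessWeight_nonneg b a j))
    (mul_nonneg (hb j) (excessWeight_nonneg a b i))

lemma swapWeight_nonneg (i j : ι) : 0 ≤ swapWeight a b i j :=
  le_min (mul_nonneg (le_min (ha i) (hb i)) (excessWeight_nonneg b a j))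
    (mul_nonneg (le_min (ha j) (hb j)) (excessWeight_nonneg a b i))

lemma directWeight_self (i : ι) : directWeight a b i i = 0 := by
  rcases excess_eq_zero_or a b i with h | h
  · simp [directWeight, excessWeight_eq_zero a b h, mul_nonneg (ha i) (excessWeight_nonneg b a i)]
  · simp [directWeight, excessWeight_eq_zero b a h, mul_nonneg (hb i) (excessWeight_nonneg a b i)]

lemma swapWeight_self (i : ι) : swapWeight a b i i = 0 := by
  rcases excess_eq_zero_or a b i with h | h
  · simp [swapWeight, excessWeight_eq_zero a b h,
      mul_nonneg (le_min (ha i) (hb i)) (excessWeight_nonneg b a i)]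
  · simp [swapWeight, excessWeight_eq_zero b a h,
      mul_nonneg (le_min (ha i) (hb i)) (excessWeight_nonneg a b i)]

lemma sqrt_swapWeight_eq_zero {i j : ι} (h : i = j) : √(swapWeight a b i j) = 0 := by
  rw [h, swapWeight_self ha hb, Real.sqrt_zero]

lemma diagWeight_nonneg (i : ι) : 0 ≤ diagWeight a b i := by
  rw [diagWeight, sub_nonneg]
  rcases excess_eq_zero_or a b i with h | h
  · calc ∑ j, (directWeight a b i j + swapWeight a b j i)
          ≤ ∑ j, min (a i) (b i) * excessWeight a b j := by
          gcongr with j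
          have := min_le_right (a i * excessWeight b a j) (b j * excessWeight a b i)
          have := min_le_right (min (a j) (b j) * excessWeight b a i)
            (min (a i) (b i) * excessWeight a b j)
          simp only [directWeight, swapWeight, excessWeight_eq_zero a b h, mul_zero] at *
          linarith
      _ ≤ min (a i) (b i) := by
          rw [← Finset.mul_sum]
          exact mul_le_of_le_one_right (le_min (ha i) (hb i)) (sum_excessWeight_le_one a b)
      _ ≤ a i := min_le_left _ _
  · calc ∑ j, (directWeight a b i j + swapWeight a b j i)
          ≤ ∑ j, a i * excessWeight b a j := by
          gcongr with j
          have := min_le_left (a i * excessWeight b a j) (b j * excessWeight a b i)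
          have := min_le_left (min (a j) (b j) * excessWeight b a i)
            (min (a i) (b i) * excessWeight a b j)
          simp only [directWeight, swapWeight, excessWeight_eq_zero b a h, mul_zero] at *
          linarith
      _ ≤ a i := by
          rw [← Finset.mul_sum]
          exact mul_le_of_le_one_right (ha i) (sum_excessWeight_le_one b a)

end Nonneg

variable (hab : ∑ i, a i = ∑ i, b i)
include hab

lemma directWeight_sub_swapWeight (i j : ι) :
    directWeight a b i j - swapWeight a b i j = excess a b i * excessWeight b a j := by
  have hA : a i * excessWeight b a j =
      min (a i) (b i) * excessWeight b a j + excess a b i * excessWeight b a j := by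
    rw [excess]; ring
  have hB : b j * excessWeight a b i =
      min (a j) (b j) * excessWeight a b i + excess a b i * excessWeight b a j := by
    rw [excess_mul_excessWeight_comm hab, excess, min_comm (a j)]; ring
  rw [directWeight, swapWeight, hA, hB, min_add_add_right, add_sub_cancel_left]

lemma diagWeight_add_sum (i : ι) :
    diagWeight a b i + ∑ j, (swapWeight a b i j + directWeight a b j i) = b i := by
  have hrow : ∑ j, (directWeight a b i j - swapWeight a b i j) = excess a b i := by
    simp only [directWeight_sub_swapWeight hab, ← Finset.mul_sum]
    exact excess_mul_sum_excessWeight hab i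
  have hcol : ∑ j, (directWeight a b j i - swapWeight a b j i) = excess b a i := by
    simp only [directWeight_sub_swapWeight hab, excess_mul_excessWeight_comm hab _ i,
      ← Finset.mul_sum]
    exact excess_mul_sum_excessWeight hab.symm i
  simp only [diagWeight, excess, Finset.sum_sub_distrib, Finset.sum_add_distrib] at *
  rw [min_comm] at hcol
  linarith

lemma sq_sqrt_directWeight_sub_sqrt_swapWeight_le {β : ℝ}
    (hβ : ∀ i, β ≤ (√(a i) - √(b i)) ^ 2) (i j : ι) :
    (√(directWeight a b i j) - √(swapWeight a b i j)) ^ 2 ≤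
      excessWeight b a j * (√(a i) - √(min (a i) (b i))) ^ 2
        + excessWeight a b i * (√(b j) - √(min (a j) (b j))) ^ 2
        - β * excessWeight a b i * excessWeight b a j := by
  have hx := excessWeight_nonneg a b i
  have hy := excessWeight_nonneg b a j
  have hmax := sq_sqrt_min_sub_sqrt_min_le (a₀ := min (a i) (b i)) (b₀ := min (a j) (b j)) hx hy
    (by simpa only [excess, min_comm (b j)] using excess_mul_excessWeight_comm hab i j)
  have hmin : β * excessWeight a b i * excessWeight b a j ≤
      min (excessWeight b a j * (√(a i) - √(min (a i) (b i))) ^ 2)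
        (excessWeight a b i * (√(b j) - √(min (a j) (b j))) ^ 2) := by
    have hA := mul_excessWeight_le a b (hβ i)
    have hB := mul_excessWeight_le b a (β := β) (i := j) (by rw [← neg_sub, neg_sq]; exact hβ j)
    rw [min_comm (b j)] at hB
    refine le_min ?_ ?_ <;> nlinarith
  have := min_add_max (excessWeight b a j * (√(a i) - √(min (a i) (b i))) ^ 2)
    (excessWeight a b i * (√(b j) - √(min (a j) (b j))) ^ 2)
  exact hmax.trans (by linarith)

lemma sum_sq_sqrt_directWeight_sub_sqrt_swapWeight_le [Nonempty ι] {β : ℝ}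
    (hβ : ∀ i, β ≤ (√(a i) - √(b i)) ^ 2) :
    ∑ i, ∑ j, (√(directWeight a b i j) - √(swapWeight a b i j)) ^ 2 ≤
      ∑ i, (√(a i) - √(b i)) ^ 2 - β := by
  set A := fun i => (√(a i) - √(min (a i) (b i))) ^ 2
  set B := fun j => (√(b j) - √(min (a j) (b j))) ^ 2
  have hbound : ∑ i, ∑ j, (√(directWeight a b i j) - √(swapWeight a b i j)) ^ 2 ≤
      (∑ i, A i) * (∑ j, excessWeight b a j) + (∑ i, excessWeight a b i) * (∑ j, B j)
        - β * ((∑ i, excessWeight a b i) * ∑ j, excessWeight b a j) :=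
    calc _ ≤ ∑ i, ∑ j, (excessWeight b a j * A i + excessWeight a b i * B j
            - β * excessWeight a b i * excessWeight b a j) :=
          Finset.sum_le_sum fun i _ => Finset.sum_le_sum fun j _ =>
            sq_sqrt_directWeight_sub_sqrt_swapWeight_le hab hβ i j
      _ = _ := by
          rw [Finset.sum_mul_sum, Finset.sum_mul_sum, Finset.sum_mul_sum, Finset.mul_sum]
          simp only [Finset.mul_sum, ← Finset.sum_add_distrib, ← Finset.sum_sub_distrib]
          exact Finset.sum_congr rfl fun i _ => Finset.sum_congr rfl fun j _ => by ring
  rw [← sum_excessWeight_comm hab] at hbound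
  have hAB : ∑ i, A i + ∑ j, B j = ∑ i, (√(a i) - √(b i)) ^ 2 := by
    rw [← Finset.sum_add_distrib]
    exact Finset.sum_congr rfl fun i _ => sq_sqrt_sub_sqrt_min_add_sq _ _
  rcases sum_excessWeight_eq_one_or a b with hs | hs
  · rw [hs] at hbound
    linarith
  · have hs0 : ∑ i, excessWeight a b i = 0 := by simp [excessWeight_eq_zero a b (hs _)]
    obtain ⟨i⟩ := ‹Nonempty ι›
    have := Finset.single_le_sum (fun k _ => sq_nonneg (√(a k) - √(b k))) (Finset.mem_univ i)
    rw [hs0] at hbound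
    linarith [hβ i]

end Weights

section PartialTrace

variable {k l ι : Type*}

lemma traceRight_add [Fintype l] (M N : Matrix (k × l) (k × l) ℂ) :
    traceRight (M + N) = traceRight M + traceRight N := by
  ext i j; simp [traceRight, Finset.sum_add_distrib]

lemma traceLeft_add [Fintype k] (M N : Matrix (k × l) (k × l) ℂ) :
    traceLeft (M + N) = traceLeft M + traceLeft N := by
  ext i j; simp [traceLeft, Finset.sum_add_distrib]

lemma traceRight_sum [Fintype l] (s : Finset ι) (M : ι → Matrix (k × l) (k × l) ℂ) :
    traceRight (∑ x ∈ s, M x) = ∑ x ∈ s, traceRight (M x) := by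
  ext i j; simp [traceRight, Matrix.sum_apply, Finset.sum_comm (s := s)]

lemma traceLeft_sum [Fintype k] (s : Finset ι) (M : ι → Matrix (k × l) (k × l) ℂ) :
    traceLeft (∑ x ∈ s, M x) = ∑ x ∈ s, traceLeft (M x) := by
  ext i j; simp [traceLeft, Matrix.sum_apply, Finset.sum_comm (s := s)]

lemma trace_traceRight [Fintype k] [Fintype l] (M : Matrix (k × l) (k × l) ℂ) :
    (traceRight M).trace = M.trace := by
  simp [traceRight, Matrix.trace, Fintype.sum_prod_type]

end PartialTrace

lemma posSemidef_proj {k : Type*} [Fintype k] (v : k → ℂ) : (proj v).PosSemidef :=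
  Matrix.posSemidef_vecMulVec_self_star v

def pairVec (a b : n) (u v : ℝ) : n × n → ℂ := Pi.single (a, b) (u : ℂ) + Pi.single (b, a) (v : ℂ)

lemma traceRight_proj_pairVec {a b : n} {u v : ℝ} (h : a = b → v = 0) :
    traceRight (proj (pairVec a b u v)) =
      Matrix.diagonal (Pi.single a ((u : ℂ) ^ 2) + Pi.single b ((v : ℂ) ^ 2)) := by
  ext i j
  rcases eq_or_ne a b with rfl | hab
  · rw [traceRight, Matrix.of_apply,
      Fintype.sum_eq_single a fun k hk => by simp [proj, pairVec, hk]]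
    simp only [proj, pairVec, h rfl, Matrix.of_apply, Pi.add_apply, Pi.single_apply,
      Matrix.diagonal_apply, Prod.mk.injEq, sq]
    aesop
  · rw [traceRight, Matrix.of_apply,
      Fintype.sum_eq_add b a hab.symm fun k hk => by simp [proj, pairVec, hk]]
    simp only [proj, pairVec, Matrix.of_apply, Pi.add_apply, Pi.single_apply,
      Matrix.diagonal_apply, Prod.mk.injEq, sq]
    aesop

lemma traceLeft_proj_pairVec {a b : n} {u v : ℝ} (h : a = b → v = 0) :
    traceLeft (proj (pairVec a b u v)) =
      Matrix.diagonal (Pi.single a ((v : ℂ) ^ 2) + Pi.single b ((u : ℂ) ^ 2)) := by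
  ext i j
  rcases eq_or_ne a b with rfl | hab
  · rw [traceLeft, Matrix.of_apply,
      Fintype.sum_eq_single a fun k hk => by simp [proj, pairVec, hk]]
    simp only [proj, pairVec, h rfl, Matrix.of_apply, Pi.add_apply, Pi.single_apply,
      Matrix.diagonal_apply, Prod.mk.injEq, sq]
    aesop
  · rw [traceLeft, Matrix.of_apply,
      Fintype.sum_eq_add a b hab fun k hk => by simp [proj, pairVec, hk]]
    simp only [proj, pairVec, Matrix.of_apply, Pi.add_apply, Pi.single_apply,
      Matrix.diagonal_apply, Prod.mk.injEq, sq]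
    aesop

lemma trace_swap_mul {d : ℕ} (M : Matrix (Fin d × Fin d) (Fin d × Fin d) ℂ) :
    (swap d * M).trace = ∑ p, M (p.2, p.1) p := by
  simp only [Matrix.trace, Matrix.diag, Matrix.mul_apply, swap, Matrix.of_apply]
  refine Finset.sum_congr rfl fun p _ => ?_
  rw [Finset.sum_eq_single (p.2, p.1)] <;> aesop

lemma trace_swap_mul_proj_pairVec {d : ℕ} (a b : Fin d) (u v : ℝ) :
    (swap d * proj (pairVec a b u v)).trace = 2 * u * v + if a = b then u ^ 2 + v ^ 2 else 0 := by
  rw [trace_swap_mul]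
  rcases eq_or_ne a b with rfl | hab
  · rw [Fintype.sum_eq_single (a, a) (fun p hp => by simp [proj, pairVec, hp])]
    simp [proj, pairVec]; ring
  · rw [Fintype.sum_eq_add (a, b) (b, a) (by simp [hab]) (fun p hp => by simp [proj, pairVec, hp])]
    simp [proj, pairVec, hab, hab.symm]; ring

lemma diagonal_sum {k ι α : Type*} [DecidableEq k] [AddCommMonoid α] (s : Finset ι)
    (f : ι → k → α) : Matrix.diagonal (∑ x ∈ s, f x) = ∑ x ∈ s, Matrix.diagonal (f x) :=
  map_sum (Matrix.diagonalAddMonoidHom k α) f s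

section Coupling

variable {ι : Type*} [Fintype ι] [DecidableEq ι]

def coupling (a b : ι → ℝ) : Matrix (ι × ι) (ι × ι) ℂ :=
  ∑ i, (proj (pairVec i i √(diagWeight a b i) 0) +
    ∑ j, proj (pairVec i j √(directWeight a b i j) √(swapWeight a b i j)))

variable {a b : ι → ℝ}

lemma posSemidef_coupling : (coupling a b).PosSemidef :=
  Matrix.posSemidef_sum _ fun _ _ =>
    (posSemidef_proj _).add (Matrix.posSemidef_sum _ fun _ _ => posSemidef_proj _)

variable (ha : ∀ i, 0 ≤ a i) (hb : ∀ i, 0 ≤ b i)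
include ha hb

lemma traceRight_coupling : traceRight (coupling a b) = Matrix.diagonal fun i => (a i : ℂ) := by
  simp only [coupling, traceRight_sum, traceRight_add, traceRight_proj_pairVec (fun _ => rfl),
    traceRight_proj_pairVec (sqrt_swapWeight_eq_zero ha hb), Matrix.diagonal_add, ← diagonal_sum]
  congr 1
  funext k
  simp [Finset.sum_add_distrib, Pi.single_apply, ← Complex.ofReal_pow, Real.sq_sqrt,
    diagWeight_nonneg ha hb, directWeight_nonneg ha hb, swapWeight_nonneg ha hb]
  norm_cast
  rw [diagWeight, Finset.sum_add_distrib]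
  ring

lemma traceLeft_coupling (hab : ∑ i, a i = ∑ i, b i) :
    traceLeft (coupling a b) = Matrix.diagonal fun i => (b i : ℂ) := by
  simp only [coupling, traceLeft_sum, traceLeft_add, traceLeft_proj_pairVec (fun _ => rfl),
    traceLeft_proj_pairVec (sqrt_swapWeight_eq_zero ha hb), Matrix.diagonal_add, ← diagonal_sum]
  congr 1
  funext k
  simp [Finset.sum_add_distrib, Pi.single_apply, ← Complex.ofReal_pow, Real.sq_sqrt,
    diagWeight_nonneg ha hb, directWeight_nonneg ha hb, swapWeight_nonneg ha hb]
  norm_cast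
  rw [← diagWeight_add_sum hab k, Finset.sum_add_distrib]

lemma trace_coupling (hsum : ∑ i, a i = 1) : (coupling a b).trace = 1 := by
  rw [← trace_traceRight, traceRight_coupling ha hb, Matrix.trace_diagonal]
  exact_mod_cast hsum

lemma isCoupling_coupling (hab : ∑ i, a i = ∑ i, b i) (hsum : ∑ i, a i = 1) :
    IsCoupling (coupling a b) (Matrix.diagonal fun i => (a i : ℂ))
      (Matrix.diagonal fun i => (b i : ℂ)) :=
  ⟨⟨posSemidef_coupling, trace_coupling ha hb hsum⟩, traceRight_coupling ha hb,
    traceLeft_coupling ha hb hab⟩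

end Coupling

section Symmetric

variable {d : ℕ} {a b : Fin d → ℝ} (ha : ∀ i, 0 ≤ a i) (hb : ∀ i, 0 ≤ b i)
include ha hb

lemma trace_swap_mul_coupling :
    (swap d * coupling a b).trace = ((∑ i, diagWeight a b i
      + ∑ i, ∑ j, 2 * √(directWeight a b i j) * √(swapWeight a b i j) : ℝ) : ℂ) := by
  simp only [coupling, Matrix.mul_sum, Matrix.mul_add, Matrix.trace_sum, Matrix.trace_add,
    trace_swap_mul_proj_pairVec]
  simp [Finset.sum_add_distrib, Real.sq_sqrt, diagWeight_nonneg ha hb]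
  refine Finset.sum_eq_zero fun i _ => Finset.sum_eq_zero fun j _ => ?_
  split_ifs with h
  · simp [h, directWeight_self ha hb, swapWeight_self ha hb]
  · simp

lemma re_trace_Psym_mul_coupling (hsum : ∑ i, a i = 1) :
    ((Psym d * coupling a b).trace).re =
      1 - (∑ i, ∑ j, (√(directWeight a b i j) - √(swapWeight a b i j)) ^ 2) / 2 := by
  have htrace : (Psym d * coupling a b).trace = (((1 + (∑ i, diagWeight a b i
      + ∑ i, ∑ j, 2 * √(directWeight a b i j) * √(swapWeight a b i j))) / 2 : ℝ) : ℂ) := by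
    rw [Psym, Matrix.smul_mul, Matrix.add_mul, Matrix.one_mul, Matrix.trace_smul,
      Matrix.trace_add, trace_coupling ha hb hsum, trace_swap_mul_coupling ha hb, smul_eq_mul]
    push_cast
    ring
  have hsq (i j : Fin d) : (√(directWeight a b i j) - √(swapWeight a b i j)) ^ 2 =
      directWeight a b i j + swapWeight a b i j
        - 2 * √(directWeight a b i j) * √(swapWeight a b i j) := by
    rw [sub_sq, Real.sq_sqrt (directWeight_nonneg ha hb i j),
      Real.sq_sqrt (swapWeight_nonneg ha hb i j)]
    ring
  rw [htrace, Complex.ofReal_re]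
  simp only [hsq, Finset.sum_sub_distrib]
  linarith [sum_diagWeight_add_sum a b]

end Symmetric

theorem stmt12 (d : ℕ) (hd : 0 < d) (lA lB : Fin d → ℝ)
    (hlA : ∀ i, 0 ≤ lA i) (hlB : ∀ i, 0 ≤ lB i)
    (hsA : ∑ i, lA i = 1) (hsB : ∑ i, lB i = 1) :
    ∃ ρAB : Matrix ((Fin d) × (Fin d)) ((Fin d) × (Fin d)) ℂ,
      IsCoupling ρAB (Matrix.diagonal fun i => ((lA i : ℝ) : ℂ))
        (Matrix.diagonal fun i => ((lB i : ℝ) : ℂ)) ∧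
      ((Psym d * ρAB).trace).re ≥
        (∑ i, Real.sqrt (lA i * lB i))
          + (⨅ i, (Real.sqrt (lA i) - Real.sqrt (lB i)) ^ 2) / 2 := by
  have : Nonempty (Fin d) := ⟨⟨0, hd⟩⟩
  have hAB : ∑ i, lA i = ∑ i, lB i := hsA.trans hsB.symm
  refine ⟨coupling lA lB, isCoupling_coupling hlA hlB hAB hsA, ?_⟩
  have hβ : ∀ i, ⨅ k, (√(lA k) - √(lB k)) ^ 2 ≤ (√(lA i) - √(lB i)) ^ 2 :=
    ciInf_le (Set.finite_range _).bddBelow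
  rw [re_trace_Psym_mul_coupling hlA hlB hsA, ge_iff_le]
  linarith [sum_sq_sqrt_directWeight_sub_sqrt_swapWeight_le hAB hβ, sum_sq_sqrt_sub_sqrt hlA hlB]
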